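/- For every integer k with 1 ≤ k ≤ 6 and every σ > 0 there exists θ₀ ∈ (π/2, π) such that for every θ ∈ (π/2, θ₀] there exists κ₀ > 0 with: for every κ ≥ κ₀ there is a constant c > 0 such that for all τ ∈ (0,1] with κ·τ·sin θ ≤ π and all z ∈ Γ^τ_{θ,κ}, one has |δ_τ(e^{−(σ+z)τ})/δ_τ(e^{−zτ}) − (σ+z)/z| ≤ c·τ^k·(|σ+z|^{k+1}·|z|^{−1} + |σ+z|·|z|^{k−1}), and moreover this quantity is ≤ c·τ^k·|z|^k. -/

import Mathlib

/-!
Put `w = z τ` and `w' = (σ + z) τ`. For `θ` close to `π / 2`, every `z ∈ Γ^τ_{θ,κ}` gives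
`‖w‖ ≤ 4` and `Re w ≥ -1/100`, while `‖w'‖ ≤ σ + 4`. Two facts about `δ(e^{-w})` then suffice.

* `δ(ξ)` is the Taylor polynomial of degree `k` of `-log ξ` at `ξ = 1`, so
  `‖δ(e^{-w}) - w‖ ≤ C ‖w‖^(k+1)` near `0`, hence by compactness on every ball.
* `‖δ(e^{-w})‖ ≥ c ‖w‖` on the compact set `{‖w‖ ≤ 4, Re w ≥ -1/100}`: near `0` by the
  previous bound, and elsewhere because `δ(e^{-w})` has no zeros there. Indeed
  `δ(ξ) = (1 - ξ) q(1 - ξ)` with `q = bdfReduced k`; here `1 - e^{-w} ≠ 0` as `‖w‖ < 2π`, and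
  `q(1 - ξ) ≠ 0` for `‖ξ‖ ≤ 51/50` (zero-stability of BDF for `k ≤ 6`, checked through explicit
  approximate factorisations of `q`).

With `N = δ(e^{-w'})` and `D = δ(e^{-w})`, the error is
`((N - w') z - (σ + z)(D - w)) / (D z)`, of the required size.
-/

open Real

/-- Generating polynomial of the k-step BDF method: δ(ξ) = ∑_{j=1}^{k} (1/j)(1−ξ)^j. -/
noncomputable def bdfDelta (k : ℕ) (ξ : ℂ) : ℂ :=
  ∑ j ∈ Finset.Icc 1 k, (1 / (j : ℂ)) * (1 - ξ) ^ j

/-- Truncated sectorial contour Γ^τ_{θ,κ}. -/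
noncomputable def contourTrunc (θ κ τ : ℝ) : Set ℂ :=
  {z : ℂ | ‖z‖ = κ ∧ |z.arg| ≤ θ} ∪
    {z : ℂ | ∃ r : ℝ, κ ≤ r ∧ r ≤ π / (τ * Real.sin θ) ∧
      (z = (r : ℂ) * Complex.exp (θ * Complex.I) ∨
        z = (r : ℂ) * Complex.exp (-θ * Complex.I))}

noncomputable def bdfReduced (k : ℕ) (u : ℂ) : ℂ :=
  ∑ j ∈ Finset.Icc 1 k, (1 / (j : ℂ)) * u ^ (j - 1)

theorem bdfDelta_eq_mul_bdfReduced (k : ℕ) (ξ : ℂ) :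
    bdfDelta k ξ = (1 - ξ) * bdfReduced k (1 - ξ) := by
  rw [bdfDelta, bdfReduced, Finset.mul_sum]
  refine Finset.sum_congr rfl fun j hj => ?_
  obtain ⟨i, rfl⟩ : ∃ i, j = i + 1 := ⟨j - 1, by grind⟩
  rw [Nat.add_sub_cancel, pow_succ]
  ring

theorem add_ne_zero_of_norm_lt {E : Type*} [SeminormedAddGroup E] {a b : E} (h : ‖b‖ < ‖a‖) :
    a + b ≠ 0 := by
  intro hab
  rw [eq_neg_of_add_eq_zero_right hab, norm_neg] at h
  exact h.false

theorem sub_le_norm_add_ofReal {g R : ℝ} (hRg : R ≤ g) {v : ℂ} (hv : ‖v‖ ≤ R) :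
    g - R ≤ ‖v + g‖ := by
  have := norm_sub_norm_le (g : ℂ) (-v)
  rw [norm_neg, Complex.norm_real, Real.norm_of_nonneg ((norm_nonneg v).trans (hv.trans hRg)),
    sub_neg_eq_add, add_comm] at this
  linarith

/-- Both roots of `v² + b v + c` have modulus `√c`. -/
theorem sq_sub_le_norm_quadratic {b c s R : ℝ} (hb : b ^ 2 ≤ 4 * c) (hs : s ^ 2 ≤ c)
    (hRs : R ≤ s) {v : ℂ} (hv : ‖v‖ ≤ R) : (s - R) ^ 2 ≤ ‖v ^ 2 + b * v + c‖ := by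
  set t := √(4 * c - b ^ 2) / 2
  have ht : t ^ 2 = (4 * c - b ^ 2) / 4 := by
    rw [div_pow, Real.sq_sqrt (by linarith)]; norm_num
  have hfactor : v ^ 2 + b * v + c = (v - ⟨-b / 2, t⟩) * (v - ⟨-b / 2, -t⟩) := by
    apply Complex.ext <;> simp [Complex.mul_re, Complex.mul_im, pow_two] <;> nlinarith
  have hroot : ∀ y : ℝ, y ^ 2 = t ^ 2 → s - R ≤ ‖v - ⟨-b / 2, y⟩‖ := by
    intro y hy
    have hnorm : s ≤ ‖(⟨-b / 2, y⟩ : ℂ)‖ := by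
      rw [Complex.norm_def, Complex.normSq_mk]
      exact Real.le_sqrt_of_sq_le (by nlinarith)
    linarith [norm_sub_norm_le (⟨-b / 2, y⟩ : ℂ) v, norm_sub_rev v ⟨-b / 2, y⟩]
  rw [hfactor, norm_mul, sq]
  exact mul_le_mul (hroot t rfl) (hroot (-t) (neg_sq t)) (by linarith) (norm_nonneg _)

theorem norm_cubic_le (e₀ e₁ e₂ e₃ : ℝ) {R : ℝ} {v : ℂ} (hv : ‖v‖ ≤ R) :
    ‖(e₀ : ℂ) + e₁ * v + e₂ * v ^ 2 + e₃ * v ^ 3‖ ≤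
      |e₀| + |e₁| * R + |e₂| * R ^ 2 + |e₃| * R ^ 3 := by
  have hpow : ∀ n, ‖v‖ ^ n ≤ R ^ n := fun n => pow_le_pow_left₀ (norm_nonneg v) hv n
  have hterm : ∀ (e : ℝ) (n : ℕ), ‖(e : ℂ) * v ^ n‖ ≤ |e| * R ^ n := fun e n => by
    rw [norm_mul, norm_pow, Complex.norm_real, Real.norm_eq_abs]
    exact mul_le_mul_of_nonneg_left (hpow n) (abs_nonneg e)
  have h₀ := hterm e₀ 0
  have h₁ := hterm e₁ 1
  simp only [pow_zero, mul_one, pow_one] at h₀ h₁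
  calc _ ≤ ‖(e₀ : ℂ)‖ + ‖e₁ * v‖ + ‖e₂ * v ^ 2‖ + ‖e₃ * v ^ 3‖ := norm_add₄_le
    _ ≤ _ := add_le_add (add_le_add (add_le_add h₀ h₁) (hterm e₂ 2)) (hterm e₃ 3)

/- Each `k * bdfReduced k (1 + v)` below is written as a product of real monic factors whose roots
all have modulus greater than `51/50`, plus a remainder smaller than that product on
`‖v‖ ≤ 51/50`. -/
theorem bdfReduced_two_ne_zero {v : ℂ} (hv : ‖v‖ ≤ 51 / 50) : bdfReduced 2 (1 + v) ≠ 0 := by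
  have key : 2 * bdfReduced 2 (1 + v) = v + (3 : ℝ) := by
    simp [bdfReduced, Finset.sum_Icc_succ_top]; ring
  refine right_ne_zero_of_mul (a := (2 : ℂ)) ?_
  rw [key, ← norm_pos_iff]
  exact lt_of_lt_of_le (by norm_num) (sub_le_norm_add_ofReal (by norm_num) hv)

theorem bdfReduced_three_ne_zero {v : ℂ} (hv : ‖v‖ ≤ 51 / 50) : bdfReduced 3 (1 + v) ≠ 0 := by
  have key : 3 * bdfReduced 3 (1 + v) = v ^ 2 + (7 / 2 : ℝ) * v + (11 / 2 : ℝ) := by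
    simp [bdfReduced, Finset.sum_Icc_succ_top]; ring
  refine right_ne_zero_of_mul (a := (3 : ℂ)) ?_
  rw [key, ← norm_pos_iff]
  exact lt_of_lt_of_le (by norm_num) (sq_sub_le_norm_quadratic (s := 11726039 / 5000000)
    (by norm_num) (by norm_num) (by norm_num) hv)

theorem bdfReduced_four_ne_zero {v : ℂ} (hv : ‖v‖ ≤ 51 / 50) : bdfReduced 4 (1 + v) ≠ 0 := by
  have key : 4 * bdfReduced 4 (1 + v) =
      (v ^ 2 + (1711953 / 1000000 : ℝ) * v + (31789867 / 10000000 : ℝ)) *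
          (v + (26213803 / 10000000 : ℝ)) +
        ((67197397 / 300000000000000 : ℝ) + (2938223 / 30000000000000 : ℝ) * v +
          (1 / 30000000 : ℝ) * v ^ 2 + (0 : ℝ) * v ^ 3) := by
    simp [bdfReduced, Finset.sum_Icc_succ_top]; ring
  refine right_ne_zero_of_mul (a := (4 : ℂ)) ?_
  rw [key]
  refine add_ne_zero_of_norm_lt ((norm_cubic_le _ _ _ _ hv).trans_lt ?_)
  rw [norm_mul]
  refine lt_of_lt_of_le ?_ (mul_le_mul (sq_sub_le_norm_quadratic (s := 1114357 / 625000)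
    (by norm_num) (by norm_num) (by norm_num) hv) (sub_le_norm_add_ofReal (by norm_num) hv)
    (by norm_num) (norm_nonneg _))
  norm_num

theorem bdfReduced_five_ne_zero {v : ℂ} (hv : ‖v‖ ≤ 51 / 50) : bdfReduced 5 (1 + v) ≠ 0 := by
  have key : 5 * bdfReduced 5 (1 + v) =
      (v ^ 2 + (44136241 / 10000000 : ℝ) * v + (3583913 / 625000 : ℝ)) *
          (v ^ 2 + (8363759 / 10000000 : ℝ) * v + (1990957 / 1000000 : ℝ)) +
        ((-24223 / 1875000000000 : ℝ) + (-204763 / 150000000000000 : ℝ) * v +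
          (11330243 / 300000000000000 : ℝ) * v ^ 2 + (0 : ℝ) * v ^ 3) := by
    simp [bdfReduced, Finset.sum_Icc_succ_top]; ring
  refine right_ne_zero_of_mul (a := (5 : ℂ)) ?_
  rw [key]
  refine add_ne_zero_of_norm_lt ((norm_cubic_le _ _ _ _ hv).trans_lt ?_)
  rw [norm_mul]
  refine lt_of_lt_of_le ?_ (mul_le_mul (sq_sub_le_norm_quadratic (s := 5986579 / 2500000)
    (by norm_num) (by norm_num) (by norm_num) hv) (sq_sub_le_norm_quadratic
    (s := 14110127 / 10000000) (by norm_num) (by norm_num) (by norm_num) hv)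
    (by norm_num) (norm_nonneg _))
  norm_num

theorem bdfReduced_six_ne_zero {v : ℂ} (hv : ‖v‖ ≤ 51 / 50) : bdfReduced 6 (1 + v) ≠ 0 := by
  have key : 6 * bdfReduced 6 (1 + v) =
      (v ^ 2 + (33479173 / 10000000 : ℝ) * v + (44501991 / 10000000 : ℝ)) *
          (v ^ 2 + (3897761 / 10000000 : ℝ) * v + (13415157 / 10000000 : ℝ)) *
          (v + (12311533 / 5000000 : ℝ)) +
        ((73451317089129 / 500000000000000000000 : ℝ) +
          (-3752504163081 / 31250000000000000000 : ℝ) * v +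
          (-131111185354049 / 500000000000000000000 : ℝ) * v ^ 2 +
          (-7591297 / 100000000000000 : ℝ) * v ^ 3) := by
    simp [bdfReduced, Finset.sum_Icc_succ_top]; ring
  refine right_ne_zero_of_mul (a := (6 : ℂ)) ?_
  rw [key]
  refine add_ne_zero_of_norm_lt ((norm_cubic_le _ _ _ _ hv).trans_lt ?_)
  rw [norm_mul, norm_mul]
  refine lt_of_lt_of_le ?_ (mul_le_mul (mul_le_mul (sq_sub_le_norm_quadratic
    (s := 10547747 / 5000000) (by norm_num) (by norm_num) (by norm_num) hv)
    (sq_sub_le_norm_quadratic (s := 11582381 / 10000000) (by norm_num) (by norm_num)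
    (by norm_num) hv) (by norm_num) (norm_nonneg _)) (sub_le_norm_add_ofReal (by norm_num) hv)
    (by norm_num) (by positivity))
  norm_num

theorem bdfReduced_one_sub_ne_zero {k : ℕ} (hk1 : 1 ≤ k) (hk6 : k ≤ 6) {ξ : ℂ}
    (hξ : ‖ξ‖ ≤ 51 / 50) : bdfReduced k (1 - ξ) ≠ 0 := by
  rw [← norm_neg] at hξ
  rw [sub_eq_add_neg]
  interval_cases k
  · simp [bdfReduced]
  · exact bdfReduced_two_ne_zero hξ
  · exact bdfReduced_three_ne_zero hξ
  · exact bdfReduced_four_ne_zero hξ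
  · exact bdfReduced_five_ne_zero hξ
  · exact bdfReduced_six_ne_zero hξ

theorem bdfDelta_eq_neg_logTaylor (k : ℕ) (ξ : ℂ) :
    bdfDelta k ξ = -Complex.logTaylor (k + 1) (ξ - 1) := by
  rw [bdfDelta, Complex.logTaylor, Finset.range_eq_Ico,
    Finset.sum_eq_sum_Ico_succ_bot (by omega : 0 < k + 1), Finset.Ico_add_one_right_eq_Icc]
  simp only [Nat.cast_zero, div_zero, zero_add, ← Finset.sum_neg_distrib]
  refine Finset.sum_congr rfl fun j _ => ?_
  rw [pow_succ, show (-1 : ℂ) ^ j * -1 * (ξ - 1) ^ j = -(-1 * (ξ - 1)) ^ j by rw [mul_pow]; ring,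
    neg_one_mul, neg_sub]
  ring

theorem continuous_bdfDelta (k : ℕ) : Continuous (bdfDelta k) := by
  unfold bdfDelta; fun_prop

theorem norm_bdfDelta_exp_neg_sub_le (k : ℕ) {w : ℂ} (hw : ‖w‖ ≤ 1 / 4) :
    ‖bdfDelta k (Complex.exp (-w)) - w‖ ≤ 2 ^ (k + 2) * ‖w‖ ^ (k + 1) := by
  set u := Complex.exp (-w) - 1 with hu_def
  have hu : ‖u‖ ≤ 2 * ‖w‖ := by
    simpa using Complex.norm_exp_sub_one_le (x := -w) (by rw [norm_neg]; linarith)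
  have hu2 : ‖u‖ ≤ 1 / 2 := by linarith
  have him : |w.im| < π := (Complex.abs_im_le_norm w).trans_lt (by linarith [pi_gt_three])
  have hlog : Complex.log (1 + u) = -w := by
    rw [add_sub_cancel, Complex.log_exp] <;> simp only [Complex.neg_im] <;>
      linarith [abs_lt.mp him]
  have hinv : (1 - ‖u‖)⁻¹ ≤ 2 := by
    rw [inv_le_comm₀ (by linarith) (by norm_num)]; linarith
  have htaylor := Complex.norm_log_sub_logTaylor_le k (hu2.trans_lt (by norm_num))
  rw [hlog] at htaylor
  calc ‖bdfDelta k (Complex.exp (-w)) - w‖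
      = ‖-w - Complex.logTaylor (k + 1) u‖ := by
        rw [bdfDelta_eq_neg_logTaylor, ← hu_def]; congr 1; ring
    _ ≤ ‖u‖ ^ (k + 1) * (1 - ‖u‖)⁻¹ / (k + 1) := htaylor
    _ ≤ ‖u‖ ^ (k + 1) * (1 - ‖u‖)⁻¹ :=
        div_le_self (mul_nonneg (by positivity) (inv_nonneg.2 (by linarith)))
          (by linarith [(Nat.cast_nonneg k : (0 : ℝ) ≤ k)])
    _ ≤ (2 * ‖w‖) ^ (k + 1) * 2 :=
        mul_le_mul (pow_le_pow_left₀ (norm_nonneg _) hu _) hinv (inv_nonneg.2 (by linarith))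
          (by positivity)
    _ = 2 ^ (k + 2) * ‖w‖ ^ (k + 1) := by ring

theorem exists_forall_norm_le_mul_pow {E F : Type*} [NormedAddCommGroup E] [ProperSpace E]
    [NormedAddCommGroup F] {f : E → F} (hf : Continuous f) {n : ℕ} {r A : ℝ} (hr : 0 < r)
    (hA : 0 < A) (hloc : ∀ x, ‖x‖ ≤ r → ‖f x‖ ≤ A * ‖x‖ ^ n) (M : ℝ) :
    ∃ C > 0, ∀ x, ‖x‖ ≤ M → ‖f x‖ ≤ C * ‖x‖ ^ n := by
  obtain ⟨B, hB⟩ := (isCompact_closedBall (0 : E) M).exists_bound_of_continuousOn hf.continuousOn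
  refine ⟨max A (B / r ^ n), lt_max_of_lt_left hA, fun x hx => ?_⟩
  rcases le_or_gt ‖x‖ r with hxr | hxr
  · exact (hloc x hxr).trans (by gcongr; exact le_max_left _ _)
  have hfx := hB x (mem_closedBall_zero_iff.mpr hx)
  have hBr : 0 ≤ B / r ^ n := div_nonneg ((norm_nonneg _).trans hfx) (by positivity)
  calc ‖f x‖ ≤ B / r ^ n * r ^ n := by rwa [div_mul_cancel₀ _ (by positivity)]
    _ ≤ max A (B / r ^ n) * ‖x‖ ^ n :=
      mul_le_mul (le_max_right _ _) (pow_le_pow_left₀ hr.le hxr.le n) (by positivity)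
        (hBr.trans (le_max_right _ _))

theorem exists_norm_bdfDelta_exp_neg_sub_le (k : ℕ) (M : ℝ) :
    ∃ C > 0, ∀ w : ℂ, ‖w‖ ≤ M → ‖bdfDelta k (Complex.exp (-w)) - w‖ ≤ C * ‖w‖ ^ (k + 1) :=
  exists_forall_norm_le_mul_pow
    (((continuous_bdfDelta k).comp (Complex.continuous_exp.comp continuous_neg)).sub continuous_id)
    (by norm_num : (0 : ℝ) < 1 / 4) (by positivity) (fun _ => norm_bdfDelta_exp_neg_sub_le k) M

theorem exp_ne_one_of_norm_lt {w : ℂ} (hw0 : w ≠ 0) (hw : ‖w‖ < 2 * π) : Complex.exp w ≠ 1 := by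
  intro h
  obtain ⟨n, rfl⟩ := Complex.exp_eq_one_iff.mp h
  have hn : (1 : ℝ) ≤ |(n : ℝ)| := by
    rw [← Int.cast_abs, ← Int.cast_one, Int.cast_le]
    exact Int.one_le_abs (by rintro rfl; simp at hw0)
  rw [norm_mul, Complex.norm_intCast] at hw
  simp only [Complex.norm_mul, Complex.norm_ofNat, Complex.norm_real, Real.norm_eq_abs,
    abs_of_pos pi_pos, Complex.norm_I, mul_one] at hw
  nlinarith [pi_pos]

theorem bdfDelta_exp_neg_ne_zero {k : ℕ} (hk1 : 1 ≤ k) (hk6 : k ≤ 6) {w : ℂ} (hw0 : w ≠ 0)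
    (hw : ‖w‖ < 2 * π) (hre : -(1 / 100) ≤ w.re) : bdfDelta k (Complex.exp (-w)) ≠ 0 := by
  have hexp : ‖Complex.exp (-w)‖ ≤ 51 / 50 := by
    rw [Complex.norm_exp, Complex.neg_re]
    calc Real.exp (-w.re) ≤ Real.exp (1 / 100) := Real.exp_le_exp.2 (by linarith)
      _ ≤ 1 / (1 - 1 / 100) := Real.exp_bound_div_one_sub_of_interval (by norm_num) (by norm_num)
      _ ≤ 51 / 50 := by norm_num
  rw [bdfDelta_eq_mul_bdfReduced]
  refine mul_ne_zero (sub_ne_zero.2 (exp_ne_one_of_norm_lt (neg_ne_zero.2 hw0) ?_).symm)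
    (bdfReduced_one_sub_ne_zero hk1 hk6 hexp)
  rwa [norm_neg]

theorem half_norm_le_of_norm_sub_le {E : Type*} [SeminormedAddCommGroup E] {x y : E} {C : ℝ}
    {n : ℕ} (hn : 2 ≤ n) (h : ‖y - x‖ ≤ C * ‖x‖ ^ n) (hx : ‖x‖ ≤ 1 / (2 * (|C| + 1))) :
    ‖x‖ / 2 ≤ ‖y‖ := by
  have hx1 : ‖x‖ ≤ 1 := hx.trans (by
    rw [div_le_one (by positivity)]; linarith [abs_nonneg C])
  have hCx : |C| * ‖x‖ ≤ 1 / 2 := by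
    calc |C| * ‖x‖ ≤ |C| * (1 / (2 * (|C| + 1))) := by gcongr
      _ ≤ 1 / 2 := by
        rw [mul_one_div, div_le_div_iff₀ (by positivity) (by norm_num)]; linarith [abs_nonneg C]
  have herr : ‖y - x‖ ≤ ‖x‖ / 2 := by
    calc ‖y - x‖ ≤ |C| * ‖x‖ ^ 2 :=
          h.trans (mul_le_mul (le_abs_self C) (pow_le_pow_of_le_one (norm_nonneg x) hx1 hn)
            (by positivity) (abs_nonneg C))
      _ = |C| * ‖x‖ * ‖x‖ := by ring
      _ ≤ 1 / 2 * ‖x‖ := by gcongr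
      _ = ‖x‖ / 2 := by ring
  linarith [norm_sub_norm_le x y, norm_sub_rev x y]

theorem IsCompact.exists_pos_mul_norm_le {E F : Type*} [NormedAddCommGroup E]
    [NormedAddCommGroup F] {K : Set E} (hK : IsCompact K) {f : E → F} (hf : ContinuousOn f K)
    (hf0 : ∀ x ∈ K, x ≠ 0 → f x ≠ 0) {r c : ℝ} (hr : 0 < r) (hc : 0 < c)
    (hloc : ∀ x ∈ K, ‖x‖ ≤ r → c * ‖x‖ ≤ ‖f x‖) : ∃ c' > 0, ∀ x ∈ K, c' * ‖x‖ ≤ ‖f x‖ := by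
  have hK' : IsCompact (K ∩ {x | r ≤ ‖x‖}) :=
    hK.inter_right (isClosed_le continuous_const continuous_norm)
  obtain ⟨m, hm, hmK⟩ := hK'.exists_forall_le' (a := 0) (f := fun x => ‖f x‖ / ‖x‖)
    ((hf.mono Set.inter_subset_left).norm.div continuous_norm.continuousOn
      fun x hx => (hr.trans_le hx.2).ne')
    fun x hx => div_pos (norm_pos_iff.2 (hf0 x hx.1 (norm_pos_iff.1 (hr.trans_le hx.2))))
      (hr.trans_le hx.2)
  refine ⟨min c m, lt_min hc hm, fun x hx => ?_⟩
  rcases le_or_gt ‖x‖ r with hxr | hxr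
  · exact (mul_le_mul_of_nonneg_right (min_le_left _ _) (norm_nonneg _)).trans (hloc x hx hxr)
  · have hmx := hmK x ⟨hx, hxr.le⟩
    rw [le_div_iff₀ (hr.trans hxr)] at hmx
    exact (mul_le_mul_of_nonneg_right (min_le_right _ _) (norm_nonneg _)).trans hmx

theorem exists_pos_mul_norm_le_norm_bdfDelta_exp_neg {k : ℕ} (hk1 : 1 ≤ k) (hk6 : k ≤ 6) :
    ∃ c > 0, ∀ w : ℂ, ‖w‖ ≤ 4 → -(1 / 100) ≤ w.re → c * ‖w‖ ≤ ‖bdfDelta k (Complex.exp (-w))‖ := by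
  obtain ⟨C, -, hC⟩ := exists_norm_bdfDelta_exp_neg_sub_le k 4
  have hK : IsCompact (Metric.closedBall (0 : ℂ) 4 ∩ {w | -(1 / 100) ≤ w.re}) :=
    (isCompact_closedBall 0 4).inter_right (isClosed_le continuous_const Complex.continuous_re)
  obtain ⟨c, hc, hcK⟩ := hK.exists_pos_mul_norm_le
    ((continuous_bdfDelta k).comp (Complex.continuous_exp.comp continuous_neg)).continuousOn
    (fun w hw hw0 => bdfDelta_exp_neg_ne_zero hk1 hk6 hw0
      (by linarith [pi_gt_three, mem_closedBall_zero_iff.1 hw.1]) hw.2)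
    (by positivity : 0 < 1 / (2 * (|C| + 1))) one_half_pos
    fun w hw hwr => by
      rw [one_div_mul_eq_div]
      exact half_norm_le_of_norm_sub_le (by omega) (hC w (mem_closedBall_zero_iff.1 hw.1)) hwr
  exact ⟨c, hc, fun w hw hre => hcK w ⟨mem_closedBall_zero_iff.2 hw, hre⟩⟩

theorem sin_cos_bounds_of_mem_Ioc {θ : ℝ} (hθ : θ ∈ Set.Ioc (π / 2) (π / 2 + 1 / 400)) :
    π ≤ 4 * Real.sin θ ∧ -(1 / 400) ≤ Real.cos θ := by
  obtain ⟨η, hη0, hη, rfl⟩ : ∃ η, 0 < η ∧ η ≤ 1 / 400 ∧ θ = η + π / 2 :=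
    ⟨θ - π / 2, by linarith [hθ.1], by linarith [hθ.2], by ring⟩
  rw [Real.sin_add_pi_div_two, Real.cos_add_pi_div_two]
  have hcos : 1 - η ^ 2 / 2 ≤ Real.cos η := Real.one_sub_sq_div_two_le_cos
  exact ⟨by nlinarith [pi_lt_d2], by linarith [Real.sin_le hη0.le]⟩

theorem norm_and_re_ofReal_mul_exp {r : ℝ} (hr : 0 ≤ r) (s : ℝ) :
    ‖(r : ℂ) * Complex.exp (s * Complex.I)‖ = r ∧
      ((r : ℂ) * Complex.exp (s * Complex.I)).re = r * Real.cos s := by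
  rw [norm_mul, Complex.norm_exp_ofReal_mul_I, Complex.norm_real, Real.norm_of_nonneg hr,
    Complex.re_ofReal_mul, Complex.exp_ofReal_mul_I_re, mul_one]
  exact ⟨rfl, rfl⟩

theorem bounds_of_mem_contourTrunc {θ κ τ : ℝ} {z : ℂ} (hz : z ∈ contourTrunc θ κ τ) (hκ : 0 < κ)
    (hτ : 0 < τ) (hθ : θ ≤ π) (hsin : 0 < Real.sin θ) (hκτ : κ * τ * Real.sin θ ≤ π) :
    κ ≤ ‖z‖ ∧ ‖z‖ * τ * Real.sin θ ≤ π ∧ ‖z‖ * Real.cos θ ≤ z.re := by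
  rcases hz with ⟨hzκ, harg⟩ | ⟨r, hκr, hrτ, hzr⟩
  · refine ⟨hzκ.ge, hzκ ▸ hκτ, ?_⟩
    rw [← Complex.norm_mul_cos_arg, ← Real.cos_abs z.arg]
    exact mul_le_mul_of_nonneg_left
      (Real.cos_le_cos_of_nonneg_of_le_pi (abs_nonneg _) hθ harg) (norm_nonneg z)
  · have hr : 0 ≤ r := hκ.le.trans hκr
    obtain ⟨hnorm, hre⟩ : ‖z‖ = r ∧ z.re = r * Real.cos θ := by
      rcases hzr with rfl | rfl
      · exact norm_and_re_ofReal_mul_exp hr θ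
      · rw [← Real.cos_neg, ← Complex.ofReal_neg]; exact norm_and_re_ofReal_mul_exp hr (-θ)
    refine ⟨hnorm ▸ hκr, ?_, by rw [hnorm, hre]⟩
    rw [le_div_iff₀ (by positivity)] at hrτ
    rwa [hnorm, mul_assoc]

theorem scaled_bounds_of_mem_contourTrunc {σ θ κ τ : ℝ} {z : ℂ}
    (hθ : θ ∈ Set.Ioc (π / 2) (π / 2 + 1 / 400)) (hσ : 0 < σ) (hκ : σ ≤ κ)
    (hτ : τ ∈ Set.Ioc (0 : ℝ) 1) (hκτ : κ * τ * Real.sin θ ≤ π) (hz : z ∈ contourTrunc θ κ τ) :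
    0 < ‖z‖ ∧ ‖(σ : ℂ) + z‖ ≤ 2 * ‖z‖ ∧ ‖z * τ‖ ≤ 4 ∧ -(1 / 100) ≤ (z * τ).re ∧
      ‖((σ : ℂ) + z) * τ‖ ≤ σ + 4 := by
  obtain ⟨hτ0, hτ1⟩ := hτ
  obtain ⟨hsin, hcos⟩ := sin_cos_bounds_of_mem_Ioc hθ
  obtain ⟨hzκ, hzτ, hzre⟩ := bounds_of_mem_contourTrunc hz (hσ.trans_le hκ) hτ0
    (by linarith [hθ.2, pi_gt_three]) (by linarith [pi_pos]) hκτ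
  have hσz : ‖(σ : ℂ) + z‖ ≤ σ + ‖z‖ := by
    simpa [Real.norm_of_nonneg hσ.le] using norm_add_le (σ : ℂ) z
  have hw : ‖z‖ * τ ≤ 4 :=
    le_of_mul_le_mul_right (by linarith) (by linarith [pi_pos] : 0 < Real.sin θ)
  simp only [norm_mul, Complex.norm_real, Real.norm_of_nonneg hτ0.le, Complex.re_mul_ofReal]
  refine ⟨by linarith, by linarith, hw, ?_, ?_⟩
  · nlinarith [mul_le_mul_of_nonneg_right hzre hτ0.le,
      mul_nonneg (mul_nonneg (norm_nonneg z) hτ0.le) (by linarith : 0 ≤ Real.cos θ + 1 / 400)]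
  · nlinarith [mul_le_mul_of_nonneg_right hσz hτ0.le, mul_le_of_le_one_right hσ.le hτ1]

theorem norm_div_div_sub_div_le {N D a z : ℂ} {τ C c₁ : ℝ} {m : ℕ} (hτ : 0 < τ) (hz : z ≠ 0)
    (hc₁ : 0 < c₁) (hN : ‖N - a * τ‖ ≤ C * ‖a * τ‖ ^ (m + 2))
    (hD : ‖D - z * τ‖ ≤ C * ‖z * τ‖ ^ (m + 2)) (hDlow : c₁ * ‖z * τ‖ ≤ ‖D‖) :
    ‖N / τ / (D / τ) - a / z‖ ≤ C / c₁ * τ ^ (m + 1) * (‖a‖ ^ (m + 2) * ‖z‖⁻¹ + ‖a‖ * ‖z‖ ^ m) := by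
  have hzτ : ‖z * τ‖ = ‖z‖ * τ := by rw [norm_mul, Complex.norm_real, Real.norm_of_nonneg hτ.le]
  have haτ : ‖a * τ‖ = ‖a‖ * τ := by rw [norm_mul, Complex.norm_real, Real.norm_of_nonneg hτ.le]
  have hz' : 0 < ‖z‖ := norm_pos_iff.2 hz
  have hD0 : D ≠ 0 := norm_pos_iff.1 (lt_of_lt_of_le (by rw [hzτ]; positivity) hDlow)
  have hC : 0 ≤ C := nonneg_of_mul_nonneg_left ((norm_nonneg _).trans hD) (by rw [hzτ]; positivity)
  have hτ' : (τ : ℂ) ≠ 0 := by exact_mod_cast hτ.ne'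
  have key : N / τ / (D / τ) - a / z = ((N - a * τ) * z - a * (D - z * τ)) / (D * z) := by
    field_simp; ring
  rw [key, norm_div, norm_mul, div_le_iff₀ (by positivity)]
  calc ‖(N - a * τ) * z - a * (D - z * τ)‖
      ≤ ‖N - a * τ‖ * ‖z‖ + ‖a‖ * ‖D - z * τ‖ := by
        rw [← norm_mul, ← norm_mul]; exact norm_sub_le _ _
    _ ≤ C * ‖a * τ‖ ^ (m + 2) * ‖z‖ + ‖a‖ * (C * ‖z * τ‖ ^ (m + 2)) := by gcongr
    _ = C / c₁ * τ ^ (m + 1) * (‖a‖ ^ (m + 2) * ‖z‖⁻¹ + ‖a‖ * ‖z‖ ^ m) *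
          (c₁ * ‖z * τ‖ * ‖z‖) := by
        rw [hzτ, haτ]; field_simp; ring
    _ ≤ C / c₁ * τ ^ (m + 1) * (‖a‖ ^ (m + 2) * ‖z‖⁻¹ + ‖a‖ * ‖z‖ ^ m) * (‖D‖ * ‖z‖) := by
        gcongr

theorem pow_mul_inv_add_mul_pow_le {x y : ℝ} (hx : 0 ≤ x) (hy : 0 < y) (hxy : x ≤ 2 * y) (m : ℕ) :
    x ^ (m + 2) * y⁻¹ + x * y ^ m ≤ (2 ^ (m + 2) + 2) * y ^ (m + 1) := by
  calc x ^ (m + 2) * y⁻¹ + x * y ^ m ≤ (2 * y) ^ (m + 2) * y⁻¹ + 2 * y * y ^ m := by gcongr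
    _ = (2 ^ (m + 2) + 2) * y ^ (m + 1) := by field_simp; ring

/-- For 1 ≤ k ≤ 6 and σ > 0, on Γ^τ_{θ,κ} with κ large enough:
|δ_τ(e^{−(σ+z)τ})/δ_τ(e^{−zτ}) − (σ+z)/z|
  ≤ c·τ^k·(|σ+z|^{k+1}|z|^{−1} + |σ+z||z|^{k−1}) ≤ c·τ^k·|z|^k. -/
theorem bdfDelta_tau_quotient_error (k : ℕ) (hk1 : 1 ≤ k) (hk6 : k ≤ 6)
    (σ : ℝ) (hσ : 0 < σ) :
    ∃ θ₀ ∈ Set.Ioo (π / 2) π, ∀ θ ∈ Set.Ioc (π / 2) θ₀,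
      ∃ κ₀ > (0 : ℝ), ∀ κ : ℝ, κ₀ ≤ κ →
        ∃ c > (0 : ℝ), ∀ τ ∈ Set.Ioc (0 : ℝ) 1, κ * τ * Real.sin θ ≤ π →
          ∀ z ∈ contourTrunc θ κ τ,
            ‖(bdfDelta k (Complex.exp (-((σ : ℂ) + z) * (τ : ℂ))) / (τ : ℂ))
                  / (bdfDelta k (Complex.exp (-z * (τ : ℂ))) / (τ : ℂ))
                - ((σ : ℂ) + z) / z‖
              ≤ c * τ ^ k * (‖(σ : ℂ) + z‖ ^ (k + 1) * (‖z‖)⁻¹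
                  + ‖(σ : ℂ) + z‖ * ‖z‖ ^ (k - 1)) ∧
            ‖(bdfDelta k (Complex.exp (-((σ : ℂ) + z) * (τ : ℂ))) / (τ : ℂ))
                  / (bdfDelta k (Complex.exp (-z * (τ : ℂ))) / (τ : ℂ))
                - ((σ : ℂ) + z) / z‖
              ≤ c * τ ^ k * ‖z‖ ^ k := by
  obtain ⟨m, rfl⟩ : ∃ m, k = m + 1 := ⟨k - 1, by omega⟩
  obtain ⟨c₁, hc₁, hlow⟩ := exists_pos_mul_norm_le_norm_bdfDelta_exp_neg hk1 hk6
  obtain ⟨C, hC, herr⟩ := exists_norm_bdfDelta_exp_neg_sub_le (m + 1) (σ + 4)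
  refine ⟨π / 2 + 1 / 400, ⟨by linarith [pi_pos], by linarith [pi_gt_three]⟩, fun θ hθ => ?_⟩
  refine ⟨σ, hσ, fun κ hκ => ⟨C / c₁ * (2 ^ (m + 2) + 2), by positivity, fun τ hτ hκτ z hz => ?_⟩⟩
  obtain ⟨hz, hσz, hw, hwre, hw'⟩ := scaled_bounds_of_mem_contourTrunc hθ hσ hκ hτ hκτ hz
  have hmain := norm_div_div_sub_div_le hτ.1 (norm_pos_iff.1 hz) hc₁ (herr _ hw')
    (herr _ (hw.trans (by linarith))) (hlow _ hw hwre)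
  simp only [neg_mul, Nat.add_sub_cancel] at hmain ⊢
  have hτ0 : 0 < τ := hτ.1
  have hK : (1 : ℝ) ≤ 2 ^ (m + 2) + 2 := le_add_of_nonneg_of_le (by positivity) one_le_two
  refine ⟨hmain.trans (le_of_le_of_eq (le_mul_of_one_le_right (by positivity) hK) (by ring)),
    hmain.trans ?_⟩
  calc _ ≤ C / c₁ * τ ^ (m + 1) * ((2 ^ (m + 2) + 2) * ‖z‖ ^ (m + 1)) := by
        gcongr
        exact pow_mul_inv_add_mul_pow_le (norm_nonneg _) hz hσz m
    _ = _ := by ring
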